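/- arXiv:2503.03773 — 3 statements merged into one kernel-verified Lean document; each statement's English description precedes it below -/
import Mathlib

section
/- In the F81 model with rates λ : Fin 4 → ℝ, λ a > 0 for all a, the distribution π is stationary for the transition probabilities: for every state a and every time t ≥ 0, ∑ b, π b · P a b t = π a. -/
open Finset

/-- Stationary probabilities of the F81 model with rates `L`. -/
noncomputable def f81Pi (L : Fin 4 → ℝ) (a : Fin 4) : ℝ := L a / ∑ b, L b

/-- The probability of at least one substitution in the F81 model with rates `L`. -/
noncomputable def f81Alpha (L : Fin 4 → ℝ) (t : ℝ) : ℝ :=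
  1 - Real.exp (-(t * ∑ a, L a))

/-- Transition probabilities of the F81 model: probability of being in state `a` at
time `t` having started in state `b`. -/
noncomputable def f81P (L : Fin 4 → ℝ) (a b : Fin 4) (t : ℝ) : ℝ :=
  if a = b then f81Alpha L t * (f81Pi L a - 1) + 1 else f81Alpha L t * f81Pi L a

/-- The distribution `π` is stationary for the F81 transition probabilities:
for every state `a` and time `t ≥ 0`, `∑ b, π b * P a b t = π a`. -/
theorem f81_pi_stationary (L : Fin 4 → ℝ) (hL : ∀ a, 0 < L a)
    (a : Fin 4) (t : ℝ) (ht : 0 ≤ t) :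
    ∑ b, f81Pi L b * f81P L a b t = f81Pi L a := by
  have hS : 0 < ∑ b, L b := Finset.sum_pos (fun i _ => hL i) ⟨a, Finset.mem_univ a⟩
  have hsum : ∑ b, f81Pi L b = 1 := by
    simp [f81Pi, ← Finset.sum_div, div_self hS.ne']
  have hP : ∀ b, f81Pi L b * f81P L a b t =
      f81Pi L b * (f81Alpha L t * f81Pi L a) +
        (if a = b then f81Pi L b * (1 - f81Alpha L t) else 0) := by
    intro b
    by_cases h : a = b <;> simp [f81P, h] <;> ring
  rw [Finset.sum_congr rfl (fun b _ => hP b), Finset.sum_add_distrib,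
    Finset.sum_ite_eq, if_pos (Finset.mem_univ a), ← Finset.sum_mul, hsum]
  ring
end

section
/- The F81 transition probabilities satisfy the Chapman–Kolmogorov equation: for rates λ : Fin 4 → ℝ with λ a > 0 for all a, for all states a, b and all times s, t ≥ 0, ∑ c, P c b s · P a c t = P a b (s + t). -/
open Finset

/-- The F81 transition probabilities satisfy the Chapman–Kolmogorov equation:
`∑ c, P c b s * P a c t = P a b (s + t)` for all states `a, b` and times `s, t ≥ 0`. -/
theorem f81_chapman_kolmogorov (L : Fin 4 → ℝ) (hL : ∀ a, 0 < L a)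
    (a b : Fin 4) (s t : ℝ) (hs : 0 ≤ s) (ht : 0 ≤ t) :
    ∑ c, f81P L c b s * f81P L a c t = f81P L a b (s + t) := by
  have hΛ : (0:ℝ) < ∑ a, L a := Finset.sum_pos (fun i _ => hL i) ⟨0, Finset.mem_univ 0⟩
  have hpi : ∑ c, f81Pi L c = 1 := by
    unfold f81Pi; rw [← Finset.sum_div]; field_simp
  have hP : ∀ (x y : Fin 4) (u : ℝ), f81P L x y u
      = f81Alpha L u * f81Pi L x + (if x = y then 1 - f81Alpha L u else 0) := by
    intro x y u; unfold f81P; split <;> ring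
  have hC : f81Alpha L (s + t) = 1 - (1 - f81Alpha L s) * (1 - f81Alpha L t) := by
    unfold f81Alpha
    have : -((s + t) * ∑ a, L a) = -(s * ∑ a, L a) + -(t * ∑ a, L a) := by ring
    rw [this, Real.exp_add]
    ring
  have h1 : ∀ c, f81P L c b s * f81P L a c t
      = f81Alpha L t * f81Pi L a * f81P L c b s
        + f81P L c b s * (if a = c then 1 - f81Alpha L t else 0) := by
    intro c; rw [hP a c t]; ring
  simp only [h1, Finset.sum_add_distrib, ← Finset.mul_sum]
  have hcol : ∑ c, f81P L c b s = 1 := by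
    simp only [hP]
    rw [Finset.sum_add_distrib, ← Finset.mul_sum, hpi]
    simp
  have hdelta : ∑ c, f81P L c b s * (if a = c then 1 - f81Alpha L t else 0)
      = f81P L a b s * (1 - f81Alpha L t) := by
    simp [mul_ite, mul_zero, Finset.sum_ite_eq]
  rw [hcol, hdelta, hP a b s, hP a b (s + t), hC]
  split <;> ring
end

section
/- The closed-form F81 transition probabilities arise as a matrix exponential of the F81 rate matrix: for rates λ : Fin 4 → ℝ with λ a > 0 for all a, define the 4×4 rate matrix Q by Q b a = λ a for a ≠ b and Q a a = −∑_{c ≠ a} λ c. Then for every t ≥ 0 and all states a, b, the (b, a) entry of the matrix exponential exp(t • Q) equals P a b t = if a = b then α t * (π a − 1) + 1 else α t * π a, where π a = λ a / (∑ c, λ c) and α t = 1 − exp(−t · ∑ c, λ c). -/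
/-!
With `s = ∑ c, L c` and `Π` the matrix all of whose rows are the stationary distribution `π`,
the rate matrix is `Q = -s • (1 - Π)`. Since `Π` is idempotent, so is `1 - Π`, and for an
idempotent `E` the exponential series collapses to `exp (c • E) = (1 - E) + Real.exp c • E`.
Hence `exp (t • Q) = Π + Real.exp (-t s) • (1 - Π)`, whose entries are the F81 probabilities.
-/

open Finset

/-- The F81 rate matrix: `Q b a = L a` for `a ≠ b`, and `Q a a = -∑_{c ≠ a} L c`. -/
noncomputable def f81Q (L : Fin 4 → ℝ) : Matrix (Fin 4) (Fin 4) ℝ :=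
  fun b a => if a = b then -(∑ c ∈ Finset.univ.erase a, L c) else L a

open NormedSpace in
theorem IsIdempotentElem.exp_smul {A : Type*} [Ring A] [Algebra ℝ A] [TopologicalSpace A]
    [IsTopologicalRing A] [ContinuousSMul ℝ A] [T2Space A] {e : A} (he : IsIdempotentElem e)
    (c : ℝ) : exp (c • e) = (1 - e) + Real.exp c • e := by
  have hterm : ∀ n : ℕ, (n.factorial : ℝ)⁻¹ • (c • e) ^ n =
      (if n = 0 then 1 - e else 0) + (c ^ n / n.factorial) • e := by
    rintro (_ | n)
    · simp
    · rw [smul_pow, he.pow_succ_eq, smul_smul, if_neg n.succ_ne_zero, zero_add, inv_mul_eq_div]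
  have hsum : HasSum (fun n : ℕ => (n.factorial : ℝ)⁻¹ • (c • e) ^ n) ((1 - e) + Real.exp c • e) := by
    simp only [hterm]
    refine (hasSum_ite_eq 0 (1 - e)).add ?_
    rw [Real.exp_eq_exp_ℝ]
    exact (expSeries_div_hasSum_exp c).smul_const e
  rw [exp_eq_tsum ℝ]
  exact hsum.tsum_eq

theorem Matrix.isIdempotentElem_replicateRow {n α : Type*} [Fintype n] [Semiring α] {v : n → α}
    (hv : ∑ i, v i = 1) : IsIdempotentElem (replicateRow n v) := by
  ext i j
  simp [mul_apply, ← Finset.sum_mul, hv]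

theorem sum_f81Pi {L : Fin 4 → ℝ} (hL : ∑ c, L c ≠ 0) : ∑ a, f81Pi L a = 1 := by
  simp only [f81Pi, ← Finset.sum_div, div_self hL]

theorem f81Q_eq_smul_one_sub {L : Fin 4 → ℝ} (hL : ∑ c, L c ≠ 0) :
    f81Q L = (-∑ c, L c) • (1 - Matrix.replicateRow (Fin 4) (f81Pi L)) := by
  ext b a
  by_cases hab : a = b
  · subst hab
    simp only [f81Q, f81Pi, ↓reduceIte, Finset.sum_erase_eq_sub (Finset.mem_univ a),
      Matrix.smul_apply, Matrix.sub_apply, Matrix.one_apply_eq, Matrix.replicateRow_apply,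
      smul_eq_mul]
    field_simp
  · simp only [f81Q, f81Pi, hab, ↓reduceIte, Matrix.smul_apply, Matrix.sub_apply,
      Matrix.one_apply_ne (Ne.symm hab), Matrix.replicateRow_apply, smul_eq_mul]
    field_simp
    ring

theorem f81_matrix_exponential_general (L : Fin 4 → ℝ) (hL : ∀ a, 0 < L a)
    (t : ℝ) (a b : Fin 4) :
    NormedSpace.exp (t • f81Q L) b a = f81P L a b t := by
  have hs : ∑ c, L c ≠ 0 := (Finset.sum_pos (fun c _ => hL c) Finset.univ_nonempty).ne'
  have hP := Matrix.isIdempotentElem_replicateRow (sum_f81Pi hs)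
  rw [f81Q_eq_smul_one_sub hs, smul_smul, mul_neg, hP.one_sub.exp_smul, sub_sub_cancel]
  by_cases hab : a = b
  · subst hab
    simp only [f81P, f81Alpha, ↓reduceIte, Matrix.add_apply, Matrix.smul_apply, Matrix.sub_apply,
      Matrix.one_apply_eq, Matrix.replicateRow_apply, smul_eq_mul]
    ring
  · simp only [f81P, f81Alpha, hab, ↓reduceIte, Matrix.add_apply, Matrix.smul_apply,
      Matrix.sub_apply, Matrix.one_apply_ne (Ne.symm hab), Matrix.replicateRow_apply, smul_eq_mul]
    ring

/-- The closed-form F81 transition probabilities arise from the matrix exponential of the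
rate matrix: for all `t ≥ 0` and states `a, b`, `(exp (t • Q)) b a = P a b t`. -/
theorem f81_matrix_exponential (L : Fin 4 → ℝ) (hL : ∀ a, 0 < L a)
    (t : ℝ) (ht : 0 ≤ t) (a b : Fin 4) :
    NormedSpace.exp (t • f81Q L) b a = f81P L a b t :=
  f81_matrix_exponential_general L hL t a b
end
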